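/- arXiv:2211.07762 — 4 statements merged into one kernel-verified Lean document; each statement's English description precedes it below -/
import Mathlib

section
/- Let (X,d) be a metric space with a reference metric d_R, and assume additionally that (X,d) is a length space. Then d(x,y) ≤ 𝖣(x,y) for all x,y ∈ X. -/
open Filter Set Topology ENNReal

noncomputable section

namespace DGauge

variable {X : Type*}

/-- The curve `γ` has `ρ`-length (total variation with respect to `ρ`) at most `L`:
every partition sum is at most `L`. -/
def PartitionSumLE [MetricSpace X] (ρ : X → X → ℝ) (γ : C(unitInterval, X)) (L : ℝ) : Prop :=
  ∀ (n : ℕ) (τ : Fin (n + 1) → unitInterval), Monotone τ →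
    ∑ i : Fin n, ρ (γ (τ i.castSucc)) (γ (τ i.succ)) ≤ L

/-- `(X, d)` is a length space: any two points can be joined, for every `ε > 0`, by a
continuous curve of length at most `d x y + ε`. -/
def IsLengthSpace (X : Type*) [MetricSpace X] : Prop :=
  ∀ x y : X, ∀ ε : ℝ, 0 < ε → ∃ γ : C(unitInterval, X),
    γ 0 = x ∧ γ 1 = y ∧ PartitionSumLE dist γ (dist x y + ε)

/-- A reference metric for the metric space `(X, d)`: a complete length metric `d_R ≤ d`
inducing the same topology on `X`. -/
structure RefMetric (X : Type*) [MetricSpace X] where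
  dR : X → X → ℝ
  refl : ∀ x, dR x x = 0
  eq_of_zero : ∀ x y, dR x y = 0 → x = y
  symm : ∀ x y, dR x y = dR y x
  triangle : ∀ x y z, dR x z ≤ dR x y + dR y z
  le_dist : ∀ x y, dR x y ≤ dist x y
  topology : ∀ (x : X) (ε : ℝ), 0 < ε → ∃ δ : ℝ, 0 < δ ∧ ∀ y, dR x y < δ → dist x y < ε
  complete : ∀ u : ℕ → X,
    (∀ ε : ℝ, 0 < ε → ∃ M : ℕ, ∀ p ≥ M, ∀ q ≥ M, dR (u p) (u q) < ε) →
    ∃ x : X, Tendsto u atTop (𝓝 x)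
  length : ∀ x y : X, ∀ ε : ℝ, 0 < ε → ∃ γ : C(unitInterval, X),
    γ 0 = x ∧ γ 1 = y ∧ PartitionSumLE dR γ (dR x y + ε)

/-- The asymptotic Lipschitz number of `f` at `x`, with respect to the metric `ρ`;
its value is `0` at isolated points (where the defining filter is trivial). -/
def asympLip [MetricSpace X] (ρ : X → X → ℝ) (f : X → ℝ) (x : X) : ℝ≥0∞ :=
  Filter.limsup (fun p : X × X => ENNReal.ofReal (|f p.1 - f p.2| / ρ p.1 p.2))
    ((𝓝 x ×ˢ 𝓝 x) ⊓ Filter.principal {p : X × X | p.1 ≠ p.2})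

/-- The function `𝖣(x,y) = Lip_a^{d_R}[d(·,y)²/2](x)`. -/
def DD [MetricSpace X] (R : RefMetric X) (x y : X) : ℝ≥0∞ :=
  asympLip R.dR (fun z => dist z y ^ 2 / 2) x

/-- Two `[0,∞]`-valued kernels are locally equivalent if every point has a neighborhood on
which each is bounded by a constant multiple of the other. -/
def LocEquiv [MetricSpace X] (f g : X → X → ℝ≥0∞) : Prop :=
  ∀ o : X, ∃ (O : Set X) (C : NNReal), O ∈ 𝓝 o ∧ 0 < C ∧
    ∀ x ∈ O, ∀ y ∈ O, (C : ℝ≥0∞)⁻¹ * g x y ≤ f x y ∧ f x y ≤ (C : ℝ≥0∞) * g x y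

lemma exists_point_on_curve [MetricSpace X] (hX : IsLengthSpace X) (x y : X) (hxy : x ≠ y)
    (n : ℕ) :
    ∃ w : X, dist x w = min (dist x y / 2) (1/(n+1)) ∧
      dist x w + dist w y ≤ dist x y + min (dist x y / 2) (1/(n+1)) / (n+1) := by
  have hd0 : 0 < dist x y := dist_pos.2 hxy
  set δ := min (dist x y / 2) (1/(n+1:ℝ)) with hδ
  have hδ0 : 0 < δ := lt_min (by positivity) (by positivity)
  have hδd : δ ≤ dist x y := (min_le_left _ _).trans (by linarith)
  have hε0 : (0:ℝ) < δ / (n+1) := by positivity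
  obtain ⟨γ, hγ0, hγ1, hγL⟩ := hX x y _ hε0
  have hc : Continuous fun t : unitInterval => dist x (γ t) :=
    continuous_const.dist γ.continuous
  have hmem : δ ∈ Icc (dist x (γ 0)) (dist x (γ 1)) := by
    rw [hγ0, hγ1, dist_self]; exact ⟨hδ0.le, hδd⟩
  obtain ⟨t, ht⟩ := intermediate_value_univ (0 : unitInterval) 1 hc hmem
  refine ⟨γ t, by simpa using ht, ?_⟩
  have hmono : Monotone ![0, t, 1] := by
    intro i j hij
    fin_cases i <;> fin_cases j <;>
      simp_all [Fin.le_def, Matrix.cons_val_zero, Matrix.cons_val_one] <;>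
      first
      | exact t.2.1
      | exact t.2.2
  have := hγL 2 ![0, t, 1] hmono
  simp [Fin.sum_univ_two, hγ0, hγ1] at this
  exact this

/-- If `(X, d)` is a length space with reference metric `d_R`, then
`d ≤ 𝖣`. -/
theorem dist_le_D {X : Type*} [MetricSpace X] (R : RefMetric X)
    (hX : IsLengthSpace X) :
    ∀ x y : X, edist x y ≤ DD R x y := by
  intro x y
  rcases eq_or_ne x y with rfl | hxy
  · simp
  have hd0 : 0 < dist x y := dist_pos.2 hxy
  set d := dist x y with hd
  choose w hw1 hw2 using fun n => exists_point_on_curve hX x y hxy n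
  set δ : ℕ → ℝ := fun n => min (d / 2) (1/(n+1)) with hδdef
  have hδ0 : ∀ n, 0 < δ n := fun n => lt_min (by positivity) (by positivity)
  have hδd : ∀ n, δ n ≤ d := fun n => (min_le_left _ _).trans (by linarith)
  have hwx : ∀ n, w n ≠ x := by
    intro n h
    have := hw1 n
    rw [h, dist_self] at this
    exact (hδ0 n).ne this
  -- limits
  have hu : Tendsto (fun n : ℕ => 1/((n:ℝ)+1)) atTop (𝓝 0) :=
    tendsto_one_div_add_atTop_nhds_zero_nat
  have hδ_lim : Tendsto δ atTop (𝓝 0) := by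
    have h1 : Tendsto (fun n : ℕ => min (d/2) (1/((n:ℝ)+1))) atTop (𝓝 (min (d/2) 0)) :=
      tendsto_const_nhds.min hu
    rw [min_eq_right (by positivity)] at h1
    exact h1
  have hw_lim : Tendsto w atTop (𝓝 x) := by
    rw [tendsto_iff_dist_tendsto_zero]
    have : (fun n => dist (w n) x) = δ := by
      funext n; rw [dist_comm]; exact hw1 n
    rw [this]; exact hδ_lim
  -- the sequence of pairs
  set p : ℕ → X × X := fun n => (w n, x) with hp
  have hp_tendsto : Tendsto p atTop
      ((𝓝 x ×ˢ 𝓝 x) ⊓ Filter.principal {q : X × X | q.1 ≠ q.2}) := by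
    refine tendsto_inf.2 ⟨hw_lim.prodMk tendsto_const_nhds, ?_⟩
    exact tendsto_principal.2 (Eventually.of_forall fun n => hwx n)
  -- lower bound sequence
  set r : ℕ → ℝ := fun n => (1 - 1/((n:ℝ)+1)) * (2*d - δ n) / 2 with hr
  have hr_lim : Tendsto r atTop (𝓝 d) := by
    have h1 : Tendsto (fun n : ℕ => (1 - 1/((n:ℝ)+1)) * (2*d - δ n) / 2) atTop
        (𝓝 ((1 - 0) * (2*d - 0) / 2)) :=
      ((tendsto_const_nhds.sub hu).mul (tendsto_const_nhds.sub hδ_lim)).div_const 2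
    have : (1 - (0:ℝ)) * (2*d - 0) / 2 = d := by ring
    rwa [this] at h1
  -- key pointwise bound
  have hkey : ∀ n : ℕ, ENNReal.ofReal (r n) ≤
      ENNReal.ofReal (|dist (w n) y ^ 2 / 2 - dist x y ^ 2 / 2| / R.dR (w n) x) := by
    intro n
    apply ENNReal.ofReal_le_ofReal
    set a := dist (w n) y with ha
    have hεδ : δ n / (n+1) ≤ δ n := by
      rw [div_le_iff₀ (by positivity)]
      nlinarith [(hδ0 n).le]
    have h1 : δ n - δ n/(n+1) ≤ d - a := by
      have := hw2 n
      rw [hw1 n] at this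
      linarith [this]
    have h2 : 2*d - δ n ≤ d + a := by
      have := dist_triangle x (w n) y
      rw [hw1 n] at this
      linarith
    have ha_le : a ≤ d := by linarith [h1, hεδ, (hδ0 n).le]
    have hnn : 0 ≤ R.dR (w n) x := by
      have := R.triangle (w n) x (w n)
      rw [R.refl, R.symm x (w n)] at this
      linarith
    have hdR_pos : 0 < R.dR (w n) x := by
      rcases hnn.lt_or_eq with h | h
      · exact h
      · exact absurd (R.eq_of_zero _ _ h.symm) (hwx n)
    have hdR_le : R.dR (w n) x ≤ δ n := by
      have := R.le_dist (w n) x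
      rw [dist_comm, hw1 n] at this
      exact this
    have habs : |a ^ 2 / 2 - d ^ 2 / 2| = (d^2 - a^2)/2 := by
      rw [abs_of_nonpos (by nlinarith [dist_nonneg (x := w n) (y := y)])]
      ring
    rw [habs]
    have hnum : (δ n - δ n/(n+1)) * (2*d - δ n) ≤ d^2 - a^2 := by
      have := mul_le_mul h1 h2 (by linarith [hδd n]) (by linarith)
      nlinarith [this]
    have hnum_nonneg : 0 ≤ (δ n - δ n/(n+1)) * (2*d - δ n) :=
      mul_nonneg (by linarith) (by linarith [hδd n])
    calc r n = (δ n - δ n/(n+1)) * (2*d - δ n) / (2 * δ n) := by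
          rw [hr]
          have hδne : δ n ≠ 0 := (hδ0 n).ne'
          have hn1 : ((n:ℝ)+1) ≠ 0 := by positivity
          field_simp
          try ring
      _ ≤ (d^2 - a^2) / (2 * δ n) := by
          exact div_le_div_of_nonneg_right hnum (by positivity)

      _ ≤ (d^2 - a^2) / 2 / R.dR (w n) x := by
          rw [div_div]
          gcongr
          all_goals first
            | nlinarith [hnum, hnum_nonneg]
            | linarith
  -- conclusion
  rw [edist_dist]
  apply le_of_forall_lt_imp_le_of_dense
  intro c hc
  have hc_top : c ≠ ⊤ := hc.ne_top
  have hcr : c.toReal < d := by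
    have := ENNReal.toReal_strict_mono (by simp) hc
    rwa [ENNReal.toReal_ofReal hd0.le] at this
  have hev : ∀ᶠ n in atTop, c.toReal < r n := hr_lim.eventually (eventually_gt_nhds hcr)
  have hfreq : ∃ᶠ q in ((𝓝 x ×ˢ 𝓝 x) ⊓ Filter.principal {q : X × X | q.1 ≠ q.2}),
      c ≤ ENNReal.ofReal (|dist q.1 y ^ 2 / 2 - dist q.2 y ^ 2 / 2| / R.dR q.1 q.2) := by
    apply hp_tendsto.frequently
    apply (hev.mono ?_).frequently
    intro n hn
    calc c = ENNReal.ofReal c.toReal := (ENNReal.ofReal_toReal hc_top).symm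
      _ ≤ ENNReal.ofReal (r n) := ENNReal.ofReal_le_ofReal hn.le
      _ ≤ _ := hkey n
  exact le_limsup_of_frequently_le' hfreq


end DGauge
end
end

section
/- Let (X,d) be a metric space with a reference metric d_R, and assume additionally that (X,d) is a length space. Call two functions f,g : X×X → [0,+∞] locally equivalent if every point of X has a neighborhood 𝒪 and a constant C > 0 with C^{−1}·g ≤ f ≤ C·g on 𝒪×𝒪. Then d_R and d are locally equivalent if and only if 𝖣 and d are locally equivalent. -/
open Filter Set Topology ENNReal

noncomputable section

namespace DGauge

variable {X : Type*}

-- ## auxiliary lemmas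

variable [MetricSpace X]

lemma dR_nonneg (R : RefMetric X) (x y : X) : 0 ≤ R.dR x y := by
  have h := R.triangle x y x
  rw [R.refl x] at h
  nlinarith [R.symm x y]

lemma dR_pos (R : RefMetric X) {x y : X} (h : x ≠ y) : 0 < R.dR x y :=
  lt_of_le_of_ne (dR_nonneg R x y) (fun h0 => h (R.eq_of_zero x y h0.symm))

lemma aux_eps {a K b : ℝ} (h : ∀ ε : ℝ, 0 < ε → a ≤ (K + ε) * (b + ε)) : a ≤ K * b := by
  have ht : Tendsto (fun ε : ℝ => (K + ε) * (b + ε)) (𝓝[>] 0) (𝓝 (K * b)) := by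
    have : Tendsto (fun ε : ℝ => (K + ε) * (b + ε)) (𝓝 0) (𝓝 ((K + 0) * (b + 0))) :=
      (((continuous_const.add continuous_id).mul (continuous_const.add continuous_id)).tendsto 0)
    simpa using this.mono_left nhdsWithin_le_nhds
  exact ge_of_tendsto ht (eventually_nhdsWithin_of_forall (fun ε hε => h ε hε))

/-- From a bound on the asymptotic Lipschitz constant, get a local Lipschitz-type bound. -/
lemma exists_nhd_of_asympLip_le (R : RefMetric X) {f : X → ℝ} {x : X} {M ε : ℝ}
    (hM : 0 ≤ M) (hε : 0 < ε) (h : asympLip R.dR f x ≤ ENNReal.ofReal M) :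
    ∃ U : Set X, IsOpen U ∧ x ∈ U ∧ ∀ z ∈ U, ∀ w ∈ U, |f z - f w| ≤ (M + ε) * R.dR z w := by
  have hlt : asympLip R.dR f x < ENNReal.ofReal (M + ε) :=
    h.trans_lt ((ENNReal.ofReal_lt_ofReal_iff (by linarith)).mpr (by linarith))
  have hev := eventually_lt_of_limsup_lt hlt
  rw [eventually_inf_principal] at hev
  rw [eventually_prod_iff] at hev
  obtain ⟨pa, hpa, pb, hpb, hcons⟩ := hev
  obtain ⟨U₁, hU₁, hU₁sub⟩ := eventually_iff_exists_mem.mp hpa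
  obtain ⟨U₂, hU₂, hU₂sub⟩ := eventually_iff_exists_mem.mp hpb
  refine ⟨interior U₁ ∩ interior U₂, (isOpen_interior.inter isOpen_interior),
    ⟨mem_interior_iff_mem_nhds.mpr hU₁, mem_interior_iff_mem_nhds.mpr hU₂⟩, ?_⟩
  intro z hz w hw
  rcases eq_or_ne z w with rfl | hzw
  · simp [R.refl]
  · have hzU : pa z := hU₁sub z (interior_subset hz.1)
    have hwU : pb w := hU₂sub w (interior_subset hw.2)
    have hval := hcons hzU hwU hzw
    have hratio : |f z - f w| / R.dR z w < M + ε :=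
      (ENNReal.ofReal_lt_ofReal_iff (by linarith)).mp hval
    have hdR : 0 < R.dR z w := dR_pos R hzw
    exact le_of_lt ((div_lt_iff₀ hdR).mp hratio)

/-- Chain bound / upper gradient estimate along a curve. -/
lemma chain_bound (R : RefMetric X) (f : X → ℝ) (γ : C(unitInterval, X)) {L M ε : ℝ}
    (hM : 0 ≤ M) (hε : 0 < ε) (b : unitInterval)
    (hlip : ∀ t : unitInterval, t ≤ b → asympLip R.dR f (γ t) ≤ ENNReal.ofReal M)
    (hsum : PartitionSumLE R.dR γ L) :
    |f (γ b) - f (γ 0)| ≤ (M + ε) * L := by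
  classical
  -- choose, for each t ≤ b, a good open set
  have hch : ∀ t : {t : unitInterval // t ≤ b}, ∃ U : Set X, IsOpen U ∧ γ t.1 ∈ U ∧
      ∀ z ∈ U, ∀ w ∈ U, |f z - f w| ≤ (M + ε) * R.dR z w :=
    fun t => exists_nhd_of_asympLip_le R hM hε (hlip t.1 t.2)
  choose U hUopen hUmem hUlip using hch
  -- Lebesgue number for the cover of Icc 0 b
  have hcpt : IsCompact (Icc (0 : unitInterval) b) := by
    have hcl : IsClosed (Icc (0 : unitInterval) b) := by
      have : Icc (0 : unitInterval) b = Subtype.val ⁻¹' Icc (0 : ℝ) (b : ℝ) := by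
        ext t
        simp only [mem_Icc, mem_preimage, Set.mem_Icc]
        exact ⟨fun ht => ⟨t.2.1, ht.2⟩, fun ht => ⟨t.2.1, ht.2⟩⟩
      rw [this]
      exact isClosed_Icc.preimage continuous_subtype_val
    exact hcl.isCompact
  have hcover : Icc (0 : unitInterval) b ⊆ ⋃ t : {t : unitInterval // t ≤ b},
      (γ ⁻¹' (U t)) := by
    intro t ht
    exact mem_iUnion.mpr ⟨⟨t, ht.2⟩, hUmem ⟨t, ht.2⟩⟩
  obtain ⟨δ, hδ, hLeb⟩ := lebesgue_number_lemma_of_metric hcpt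
    (fun t => (hUopen t).preimage γ.continuous) hcover
  -- fine partition
  obtain ⟨n, hn⟩ := exists_nat_gt ((b : ℝ) / δ)
  have hn0 : 0 < n := by
    have : (0:ℝ) ≤ (b : ℝ) / δ := div_nonneg b.2.1 hδ.le
    exact_mod_cast this.trans_lt hn
  have hbn : (b : ℝ) / n < δ := by
    rw [div_lt_iff₀ (by exact_mod_cast hn0)]
    rw [div_lt_iff₀ hδ] at hn
    linarith [hn]
  set τ : ℕ → unitInterval := fun k => projIcc 0 1 zero_le_one (k * ((b : ℝ) / n)) with hτ
  have hstep : 0 ≤ (b : ℝ) / n := div_nonneg b.2.1 (by positivity)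
  have hτval : ∀ k : ℕ, k ≤ n → (τ k : ℝ) = k * ((b : ℝ) / n) := by
    intro k hk
    have hmem : k * ((b : ℝ) / n) ∈ Icc (0:ℝ) 1 := by
      constructor
      · positivity
      · have : (k : ℝ) * ((b : ℝ) / n) ≤ n * ((b : ℝ) / n) := by
          apply mul_le_mul_of_nonneg_right _ hstep
          exact_mod_cast hk
        have hb1 : (n : ℝ) * ((b : ℝ) / n) = (b : ℝ) := by
          field_simp
        rw [hb1] at this
        exact this.trans b.2.2
    rw [hτ]
    simp only [projIcc_of_mem zero_le_one hmem]
  have hτmono : Monotone τ := by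
    intro i j hij
    apply monotone_projIcc
    exact mul_le_mul_of_nonneg_right (by exact_mod_cast hij) hstep
  have hτ0 : τ 0 = 0 := by
    rw [hτ]; simp only [Nat.cast_zero, zero_mul]
    exact projIcc_left zero_le_one
  have hτn : τ n = b := by
    have : (n : ℝ) * ((b : ℝ) / n) = (b : ℝ) := by field_simp
    rw [hτ]; simp only [this]
    exact projIcc_val zero_le_one b
  have hτle : ∀ k : ℕ, k ≤ n → τ k ≤ b := by
    intro k hk
    rw [← hτn]
    exact hτmono hk
  -- each consecutive pair is controlled
  have hpair : ∀ k : ℕ, k < n →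
      |f (γ (τ (k+1))) - f (γ (τ k))| ≤ (M + ε) * R.dR (γ (τ k)) (γ (τ (k+1))) := by
    intro k hk
    have hτkb : τ k ≤ b := hτle k hk.le
    obtain ⟨t, ht⟩ := hLeb (τ k) ⟨(τ k).2.1, hτkb⟩
    have h1 : τ k ∈ Metric.ball (τ k) δ := by simp [hδ]
    have h2 : τ (k+1) ∈ Metric.ball (τ k) δ := by
      rw [Metric.mem_ball, Subtype.dist_eq, hτval k hk.le, hτval (k+1) hk,
        Real.dist_eq]
      have heq : (↑(k+1) : ℝ) * ((b:ℝ)/n) - ↑k * ((b:ℝ)/n) = (b:ℝ)/n := by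
        push_cast; ring
      rw [heq, abs_of_nonneg hstep]; exact hbn
    have hz := ht h2
    have hw := ht h1
    have := hUlip t (γ (τ (k+1))) hz (γ (τ k)) hw
    rw [R.symm] at this
    exact this
  -- telescoping
  have htel : f (γ b) - f (γ 0) = ∑ k ∈ Finset.range n, (f (γ (τ (k+1))) - f (γ (τ k))) := by
    rw [Finset.sum_range_sub (fun k => f (γ (τ k)))]
    rw [hτ0, hτn]
  have habs : |f (γ b) - f (γ 0)| ≤
      ∑ k ∈ Finset.range n, |f (γ (τ (k+1))) - f (γ (τ k))| := by
    rw [htel]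
    exact Finset.abs_sum_le_sum_abs _ _
  have hsum2 : ∑ k ∈ Finset.range n, |f (γ (τ (k+1))) - f (γ (τ k))| ≤
      (M + ε) * ∑ k ∈ Finset.range n, R.dR (γ (τ k)) (γ (τ (k+1))) := by
    rw [Finset.mul_sum]
    apply Finset.sum_le_sum
    intro k hk
    exact hpair k (Finset.mem_range.mp hk)
  have hsum3 : ∑ k ∈ Finset.range n, R.dR (γ (τ k)) (γ (τ (k+1))) ≤ L := by
    have hP := hsum n (fun i : Fin (n+1) => τ i.1) (fun i j hij => hτmono hij)
    rw [← Fin.sum_univ_eq_sum_range (fun k => R.dR (γ (τ k)) (γ (τ (k+1))))]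
    simpa using hP
  have hL0 : 0 ≤ L := by
    have := hsum 0 (fun _ => 0) monotone_const
    simpa using this
  calc |f (γ b) - f (γ 0)| ≤ (M + ε) * ∑ k ∈ Finset.range n, R.dR (γ (τ k)) (γ (τ (k+1))) :=
        habs.trans hsum2
    _ ≤ (M + ε) * L := by
        apply mul_le_mul_of_nonneg_left hsum3 (by linarith)


set_option maxHeartbeats 1600000 in
/-- Key lower bound: in a length space, `d(x,y) ≤ 𝖣(x,y)`. -/
lemma edist_le_DD (R : RefMetric X) (hX : IsLengthSpace X) (x y : X) :
    edist x y ≤ DD R x y := by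
  rcases eq_or_ne x y with rfl | hxy
  · simp
  set δ := dist x y with hδdef
  have hδ : 0 < δ := dist_pos.mpr hxy
  clear_value δ
  have key : ∀ θ : ℝ, 0 ≤ θ → θ < δ → ENNReal.ofReal θ ≤ DD R x y := by
    intro θ hθ0 hθδ
    apply le_limsup_of_frequently_le'
    rw [Filter.frequently_iff]
    intro Uf hUf
    rw [Filter.mem_inf_iff] at hUf
    obtain ⟨V, hV, W, hW, rfl⟩ := hUf
    rw [Filter.mem_prod_iff] at hV
    obtain ⟨A, hA, B, hB, hABV⟩ := hV
    obtain ⟨η₁, hη₁, hballA⟩ := Metric.mem_nhds_iff.mp hA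
    obtain ⟨η₂, hη₂, hballB⟩ := Metric.mem_nhds_iff.mp hB
    set η := min η₁ η₂ with hηdef
    have hη : 0 < η := lt_min hη₁ hη₂
    -- numeric setup
    set e := (δ - θ) / 3 with hedef
    have he : 0 < e := by rw [hedef]; linarith
    have he3 : e ≤ δ / 3 := by rw [hedef]; linarith
    set r := min (η / 2) (min e (δ / 2)) with hrdef
    have hr : 0 < r := by
      apply lt_min (by linarith)
      exact lt_min he (by linarith)
    have hrη : r < η := (min_le_left _ _).trans_lt (by linarith)
    have hre : r ≤ e := (min_le_right _ _).trans (min_le_left _ _)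
    have hrδ : r ≤ δ / 2 := (min_le_right _ _).trans (min_le_right _ _)
    set ε' := r * e / δ with hε'def
    have hε' : 0 < ε' := by positivity
    have hε'r : ε' ≤ r / 3 := by
      rw [hε'def, div_le_div_iff₀ hδ (by norm_num : (0:ℝ) < 3)]
      nlinarith
    clear_value η e r ε'
    -- curve from x to y
    obtain ⟨γ, hγ0, hγ1, hγsum⟩ := hX x y ε' hε'
    -- find z at distance exactly r from x on the curve
    set ψ : ℝ → ℝ := fun s => dist x (γ (projIcc 0 1 zero_le_one s)) with hψdef
    have hψc : Continuous ψ :=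
      continuous_const.dist (γ.continuous.comp (continuous_projIcc))
    have hψ0 : ψ 0 = 0 := by
      rw [hψdef]; simp only [projIcc_left]
      have : γ ⟨(0:ℝ), by norm_num⟩ = x := by rw [← hγ0]; rfl
      rw [this, dist_self]
    have hψ1 : ψ 1 = δ := by
      rw [hψdef]; simp only [projIcc_right]
      have : γ ⟨(1:ℝ), by norm_num⟩ = y := by rw [← hγ1]; rfl
      rw [this, hδdef]
    have hIVT := intermediate_value_Icc (zero_le_one) hψc.continuousOn
    have hrmem : r ∈ Icc (ψ 0) (ψ 1) := by
      rw [hψ0, hψ1]; exact ⟨hr.le, by linarith⟩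
    obtain ⟨s, hs, hψs⟩ := hIVT hrmem
    set t : unitInterval := projIcc 0 1 zero_le_one s with htdef
    set z := γ t with hzdef
    have hxz : dist x z = r := hψs
    -- partition (0, t, 1)
    have hmono : Monotone ![0, t, 1] := by
      rw [Fin.monotone_iff_le_succ]
      intro i
      fin_cases i
      · simpa using t.2.1
      · simpa using (show t ≤ 1 from t.2.2)
    have hP := hγsum 2 ![0, t, 1] hmono
    rw [Fin.sum_univ_two] at hP
    simp only [Fin.castSucc_zero, Fin.succ_zero_eq_one, Fin.castSucc_one, Fin.succ_one_eq_two] at hP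
    have hxzy : dist x z + dist z y ≤ δ + ε' := by
      have h0 : (![0, t, 1] : Fin 3 → unitInterval) 0 = 0 := rfl
      have h1 : (![0, t, 1] : Fin 3 → unitInterval) 1 = t := rfl
      have h2 : (![0, t, 1] : Fin 3 → unitInterval) 2 = 1 := rfl
      rw [h0, h1, h2, hγ0, hγ1] at hP
      rw [hδdef]
      exact hP
    have hzy_ub : dist z y ≤ δ + ε' - r := by rw [← hxz]; linarith
    have hzy_lb : δ - r ≤ dist z y := by
      have := dist_triangle x z y
      linarith
    have hzx : z ≠ x := by
      intro h
      rw [h, dist_self] at hxz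
      linarith
    -- the point pair (z, x)
    refine ⟨(z, x), ?_, ?_⟩
    · constructor
      · apply hABV
        constructor
        · apply hballA
          rw [Metric.mem_ball, dist_comm]
          rw [hxz]
          exact hrη.trans_le (by rw [hηdef]; exact min_le_left _ _)
        · exact hballB (Metric.mem_ball_self hη₂)
      · exact hW (by exact hzx : ((z, x) : X × X) ∈ {p : X × X | p.1 ≠ p.2})
    · -- the value bound
      apply ENNReal.ofReal_le_ofReal
      have hdRpos : 0 < R.dR z x := dR_pos R hzx
      have hdRle : R.dR z x ≤ r := by
        have := R.le_dist z x
        rw [dist_comm z x, hxz] at this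
        exact this
      have hnum : (r - ε') * (2 * δ - r) / 2 ≤ |dist z y ^ 2 / 2 - dist x y ^ 2 / 2| := by
        have hd : dist z y ^ 2 / 2 - dist x y ^ 2 / 2 ≤ 0 := by
          rw [← hδdef]
          nlinarith [hzy_ub, hzy_lb, dist_nonneg (x := z) (y := y)]
        rw [abs_of_nonpos hd, ← hδdef]
        nlinarith [hzy_ub, hzy_lb, dist_nonneg (x := z) (y := y)]
      rw [le_div_iff₀ hdRpos]
      have hkey : θ * r ≤ (r - ε') * (2 * δ - r) / 2 := by
        have hθe : θ = δ - 3 * e := by rw [hedef]; ring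
        have heδ : e ≤ δ := by linarith
        have hfe : r - ε' = r * (δ - e) / δ := by
          rw [hε'def]; field_simp
        rw [hfe, div_mul_eq_mul_div, div_div, le_div_iff₀ (by positivity)]
        nlinarith [mul_nonneg (mul_nonneg hr.le he.le) hδ.le,
          mul_nonneg (mul_nonneg hr.le he.le) he.le,
          mul_nonneg (mul_nonneg hr.le (sub_nonneg.2 hre)) (sub_nonneg.2 heδ)]
      calc θ * R.dR z x ≤ θ * r := by
            apply mul_le_mul_of_nonneg_left hdRle hθ0
        _ ≤ (r - ε') * (2 * δ - r) / 2 := hkey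
        _ ≤ |dist z y ^ 2 / 2 - dist x y ^ 2 / 2| := hnum
  -- conclude
  rw [edist_dist, ← hδdef]
  apply ENNReal.le_of_forall_pos_le_add
  intro ε hε _
  rcases le_or_gt δ (ε : ℝ) with h | h
  · calc ENNReal.ofReal δ ≤ ENNReal.ofReal ε := ENNReal.ofReal_le_ofReal h
      _ = (ε : ℝ≥0∞) := ENNReal.ofReal_coe_nnreal
      _ ≤ DD R x y + ε := le_add_self
  · have : ENNReal.ofReal δ ≤ ENNReal.ofReal (δ - ε) + ENNReal.ofReal ε := by
      rw [← ENNReal.ofReal_add (by linarith) (by positivity)]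
      apply ENNReal.ofReal_le_ofReal
      linarith
    refine this.trans ?_
    rw [ENNReal.ofReal_coe_nnreal]
    exact add_le_add_left (key (δ - ε) (by linarith) (by have : (0:ℝ) < ε := hε; linarith)) _


/-- Upper bound on `𝖣` from a local comparison `dist ≤ C · d_R`. -/
lemma DD_le (R : RefMetric X) {x : X} {O : Set X} {C : ℝ} (hC : 0 ≤ C) (hO : O ∈ 𝓝 x)
    (hcomp : ∀ z ∈ O, ∀ w ∈ O, dist z w ≤ C * R.dR z w) (y : X) :
    DD R x y ≤ ENNReal.ofReal (C * dist x y) := by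
  apply ENNReal.le_of_forall_pos_le_add
  intro ε hε _
  have hεR : (0:ℝ) < ε := hε
  have key : DD R x y ≤ ENNReal.ofReal (C * dist x y + ε) := by
    apply Filter.limsup_le_of_le
    · isBoundedDefault
    · rw [eventually_inf_principal]
      set η : ℝ := ε / (C + 1) with hηdef
      have hη : 0 < η := by positivity
      have hT : (O ∩ Metric.ball x η) ×ˢ (O ∩ Metric.ball x η) ∈ 𝓝 x ×ˢ 𝓝 x :=
        prod_mem_prod (Filter.inter_mem hO (Metric.ball_mem_nhds x hη))
          (Filter.inter_mem hO (Metric.ball_mem_nhds x hη))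
      apply Filter.eventually_of_mem hT
      rintro ⟨z, w⟩ ⟨⟨hzO, hzb⟩, ⟨hwO, hwb⟩⟩ hne
      simp only [Set.mem_setOf_eq] at hne
      apply ENNReal.ofReal_le_ofReal
      have hdR : 0 < R.dR z w := dR_pos R hne
      rw [div_le_iff₀ hdR]
      have h1 : |dist z y - dist w y| ≤ dist z w := abs_dist_sub_le z w y
      have h2 : |dist z y ^ 2 / 2 - dist w y ^ 2 / 2| =
          |dist z y - dist w y| * ((dist z y + dist w y) / 2) := by
        rw [show dist z y ^ 2 / 2 - dist w y ^ 2 / 2 =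
          (dist z y - dist w y) * ((dist z y + dist w y) / 2) by ring, abs_mul,
          abs_of_nonneg (show (0:ℝ) ≤ (dist z y + dist w y) / 2 by positivity)]
      have hzy : dist z y ≤ dist x y + η := by
        have := dist_triangle z x y
        have hzx : dist z x < η := Metric.mem_ball.mp hzb
        linarith
      have hwy : dist w y ≤ dist x y + η := by
        have := dist_triangle w x y
        have hwx : dist w x < η := Metric.mem_ball.mp hwb
        linarith
      have hzw : dist z w ≤ C * R.dR z w := hcomp z hzO w hwO
      have hCη : C * η ≤ ε := by
        rw [hηdef, mul_comm, div_mul_eq_mul_div, div_le_iff₀ (by linarith : (0:ℝ) < C + 1)]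
        nlinarith
      have havg : (dist z y + dist w y) / 2 ≤ dist x y + η := by linarith
      calc |dist z y ^ 2 / 2 - dist w y ^ 2 / 2|
          ≤ dist z w * ((dist z y + dist w y) / 2) := by
            rw [h2]
            apply mul_le_mul_of_nonneg_right h1 (by positivity)
        _ ≤ (C * R.dR z w) * (dist x y + η) := by
            apply mul_le_mul hzw havg (by positivity) (by positivity)
        _ = (C * (dist x y + η)) * R.dR z w := by ring
        _ ≤ (C * dist x y + ε) * R.dR z w := by
            apply mul_le_mul_of_nonneg_right _ hdR.le
            nlinarith
  refine key.trans ?_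
  calc ENNReal.ofReal (C * dist x y + ε)
      ≤ ENNReal.ofReal (C * dist x y) + ENNReal.ofReal ε := ENNReal.ofReal_add_le
    _ = ENNReal.ofReal (C * dist x y) + ε := by rw [ENNReal.ofReal_coe_nnreal]


set_option maxHeartbeats 1600000 in
/-- Converse estimate: from local bound `𝖣 ≤ C·d` we get `d ≤ 4C·d_R` near the center. -/
lemma dist_le_of_DD (R : RefMetric X) {o : X} {O : Set X} {C : ℝ} (hC : 0 < C) {r : ℝ}
    (hr : 0 < r) (hball : Metric.ball o r ⊆ O)
    (hDD : ∀ z ∈ O, ∀ y ∈ O, DD R z y ≤ ENNReal.ofReal C * edist z y)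
    {x y : X} (hx : x ∈ Metric.ball o (r/6)) (hy : y ∈ Metric.ball o (r/6)) :
    dist x y ≤ 4 * C * R.dR x y := by
  rcases eq_or_ne x y with rfl | hxy
  · simp [R.refl]
  set δ := dist x y with hδdef
  have hδ : 0 < δ := dist_pos.mpr hxy
  have hδr : δ < r / 3 := by
    have h1 : dist x o < r / 6 := Metric.mem_ball.mp hx
    have h2 : dist y o < r / 6 := Metric.mem_ball.mp hy
    have := dist_triangle x o y
    rw [hδdef]
    rw [dist_comm y o] at h2
    linarith
  have hyO : y ∈ O := hball (Metric.mem_ball.mp (by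
    have : dist y o < r / 6 := Metric.mem_ball.mp hy
    exact Metric.mem_ball.mpr (by linarith)))
  have main : δ / 2 ≤ (2 * C) * R.dR x y := by
    apply aux_eps
    intro ε hε
    obtain ⟨γ, hγ0, hγ1, hγsum⟩ := R.length x y ε hε
    set gR : ℝ → ℝ := fun s => dist (γ (projIcc 0 1 zero_le_one s)) y with hgRdef
    have hgc : Continuous gR :=
      (γ.continuous.comp continuous_projIcc).dist continuous_const
    have hγmem : ∀ t : unitInterval, dist (γ t) y ≤ 2 * δ → γ t ∈ O := by
      intro t ht
      apply hball
      rw [Metric.mem_ball]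
      have h2 : dist y o < r / 6 := Metric.mem_ball.mp hy
      have := dist_triangle (γ t) y o
      linarith
    have hM : ∀ t : unitInterval, dist (γ t) y ≤ 2 * δ →
        asympLip R.dR (fun z => dist z y ^ 2 / 2) (γ t) ≤ ENNReal.ofReal (2 * C * δ) := by
      intro t ht
      calc asympLip R.dR (fun z => dist z y ^ 2 / 2) (γ t) = DD R (γ t) y := rfl
        _ ≤ ENNReal.ofReal C * edist (γ t) y := hDD (γ t) (hγmem t ht) y hyO
        _ = ENNReal.ofReal (C * dist (γ t) y) := by
            rw [edist_dist, ← ENNReal.ofReal_mul hC.le]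
        _ ≤ ENNReal.ofReal (2 * C * δ) := ENNReal.ofReal_le_ofReal (by nlinarith)
    have hgproj : ∀ t : unitInterval, gR (t : ℝ) = dist (γ t) y := by
      intro t
      rw [hgRdef]
      simp only [projIcc_val]
    by_cases hA : ∃ s ∈ Icc (0:ℝ) 1, 2 * δ ≤ gR s
    · -- the curve exits the ball of radius 2δ around y
      set A := Icc (0:ℝ) 1 ∩ gR ⁻¹' (Ici (2 * δ)) with hAdef
      have hAne : A.Nonempty := by
        obtain ⟨s, hs1, hs2⟩ := hA
        exact ⟨s, hs1, hs2⟩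
      have hAclosed : IsClosed A := isClosed_Icc.inter (isClosed_Ici.preimage hgc)
      have hAbdd : BddBelow A := ⟨0, fun s hs => hs.1.1⟩
      set T := sInf A with hTdef
      have hTA : T ∈ A := hAclosed.csInf_mem hAne hAbdd
      have hT01 : T ∈ Icc (0:ℝ) 1 := hTA.1
      have hgTge : 2 * δ ≤ gR T := hTA.2
      have hgR0 : gR 0 = δ := by
        rw [hgRdef]
        simp only [projIcc_left]
        have h0 : γ (⟨0, by norm_num⟩ : unitInterval) = x := by rw [← hγ0]; rfl
        rw [h0, ← hδdef]
      have hT0 : 0 < T := by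
        rcases hT01.1.eq_or_lt with h | h
        · exfalso
          rw [← h] at hgTge
          rw [hgR0] at hgTge
          linarith
        · exact h
      have hlt : ∀ s, 0 ≤ s → s < T → gR s < 2 * δ := by
        intro s h0 hsT
        by_contra h
        push_neg at h
        have hsA : s ∈ A := ⟨⟨h0, hsT.le.trans hT01.2⟩, h⟩
        exact absurd (csInf_le hAbdd hsA) (not_le.mpr hsT)
      have hgT_le : gR T ≤ 2 * δ := by
        have htend : Tendsto gR (𝓝[<] T) (𝓝 (gR T)) :=
          hgc.continuousAt.mono_left nhdsWithin_le_nhds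
        apply le_of_tendsto htend
        have h1 : ∀ᶠ s in 𝓝[<] T, 0 < s :=
          eventually_nhdsWithin_of_eventually_nhds (eventually_gt_nhds hT0)
        have h2 : ∀ᶠ s in 𝓝[<] T, s < T := eventually_mem_nhdsWithin
        filter_upwards [h1, h2] with s hs1 hs2
        exact (hlt s hs1.le hs2).le
      have hgTeq : gR T = 2 * δ := le_antisymm hgT_le hgTge
      set b : unitInterval := projIcc 0 1 zero_le_one T with hbdef
      have hbval : (b : ℝ) = T := by
        rw [hbdef, projIcc_of_mem zero_le_one hT01]
      have hlip : ∀ t : unitInterval, t ≤ b →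
          asympLip R.dR (fun z => dist z y ^ 2 / 2) (γ t) ≤ ENNReal.ofReal (2 * C * δ) := by
        intro t htb
        apply hM
        have htT : (t : ℝ) ≤ T := by rw [← hbval]; exact htb
        rw [← hgproj t]
        rcases htT.eq_or_lt with h | h
        · rw [h, hgTeq]
        · exact (hlt t t.2.1 h).le
      have hcb := chain_bound R (fun z => dist z y ^ 2 / 2) γ (M := 2 * C * δ) (ε := ε * δ)
        (by positivity) (by positivity) b hlip hγsum
      have hfb : dist (γ b) y = 2 * δ := by rw [← hgproj b, hbval, hgTeq]
      rw [hγ0] at hcb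
      simp only [hfb, ← hδdef] at hcb
      have habs : |(2 * δ) ^ 2 / 2 - δ ^ 2 / 2| = 3 * δ ^ 2 / 2 := by
        rw [abs_of_nonneg (by nlinarith)]; ring
      rw [habs] at hcb
      nlinarith [hcb, dR_nonneg R x y]
    · -- the curve stays in the ball of radius 2δ around y
      push_neg at hA
      have hlip : ∀ t : unitInterval, t ≤ 1 →
          asympLip R.dR (fun z => dist z y ^ 2 / 2) (γ t) ≤ ENNReal.ofReal (2 * C * δ) := by
        intro t _
        apply hM
        rw [← hgproj t]
        exact (hA (t : ℝ) ⟨t.2.1, t.2.2⟩).le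
      have hcb := chain_bound R (fun z => dist z y ^ 2 / 2) γ (M := 2 * C * δ) (ε := ε * δ)
        (by positivity) (by positivity) 1 hlip hγsum
      rw [hγ0, hγ1] at hcb
      simp only [dist_self, ← hδdef] at hcb
      have habs : |(0:ℝ) ^ 2 / 2 - δ ^ 2 / 2| = δ ^ 2 / 2 := by
        rw [abs_of_nonpos (by nlinarith)]; ring
      rw [habs] at hcb
      nlinarith [hcb, dR_nonneg R x y]
  linarith


/-- `d_R` and `d` are locally equivalent if and only if `𝖣` and `d` are
locally equivalent. -/
theorem locEquiv_dR_iff_locEquiv_D {X : Type*} [MetricSpace X] (R : RefMetric X)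
    (hX : IsLengthSpace X) :
    LocEquiv (fun x y => ENNReal.ofReal (R.dR x y)) (fun x y => edist x y) ↔
      LocEquiv (DD R) (fun x y => edist x y) := by
  constructor
  · -- forward
    intro H o
    obtain ⟨O, C, hO, hC, hb⟩ := H o
    have hcomp : ∀ z ∈ O, ∀ w ∈ O, dist z w ≤ (C : ℝ) * R.dR z w := by
      intro z hz w hw
      have h1 := (hb z hz w hw).1
      have h2 : edist z w ≤ (C : ℝ≥0∞) * ENNReal.ofReal (R.dR z w) := by
        have := mul_le_mul_right h1 (C : ℝ≥0∞)
        rwa [← mul_assoc, ENNReal.mul_inv_cancel (by exact_mod_cast hC.ne')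
          ENNReal.coe_ne_top, one_mul] at this
      rw [edist_dist, ← ENNReal.ofReal_coe_nnreal, ← ENNReal.ofReal_mul C.coe_nonneg] at h2
      exact (ENNReal.ofReal_le_ofReal_iff (mul_nonneg C.coe_nonneg (dR_nonneg R z w))).mp h2
    refine ⟨interior O, max C 1, interior_mem_nhds.mpr hO,
      lt_of_lt_of_le zero_lt_one (le_max_right C 1), ?_⟩
    intro x hx y hy
    constructor
    · -- lower bound for DD
      have h1 : ((max C 1 : NNReal) : ℝ≥0∞)⁻¹ ≤ 1 := by
        rw [ENNReal.inv_le_one]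
        exact_mod_cast le_max_right C 1
      calc ((max C 1 : NNReal) : ℝ≥0∞)⁻¹ * edist x y ≤ 1 * edist x y :=
            mul_le_mul_left h1 _
        _ = edist x y := one_mul _
        _ ≤ DD R x y := edist_le_DD R hX x y
    · -- upper bound for DD
      have h2 := DD_le R C.coe_nonneg (mem_interior_iff_mem_nhds.mp hx) hcomp y
      calc DD R x y ≤ ENNReal.ofReal ((C : ℝ) * dist x y) := h2
        _ = (C : ℝ≥0∞) * edist x y := by
            rw [ENNReal.ofReal_mul C.coe_nonneg, edist_dist, ENNReal.ofReal_coe_nnreal]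
        _ ≤ ((max C 1 : NNReal) : ℝ≥0∞) * edist x y := by
            apply mul_le_mul_left
            exact_mod_cast le_max_left C 1
  · -- converse
    intro H o
    obtain ⟨O, C, hO, hC, hb⟩ := H o
    obtain ⟨r, hr, hball⟩ := Metric.mem_nhds_iff.mp hO
    have hCpos : (0:ℝ) < (C : ℝ) := hC
    have hDD : ∀ z ∈ O, ∀ y ∈ O, DD R z y ≤ ENNReal.ofReal (C : ℝ) * edist z y := by
      intro z hz y hy
      have := (hb z hz y hy).2
      rwa [← ENNReal.ofReal_coe_nnreal] at this
    have hkey : ∀ x ∈ Metric.ball o (r/6), ∀ y ∈ Metric.ball o (r/6),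
        dist x y ≤ 4 * (C : ℝ) * R.dR x y :=
      fun x hx y hy => dist_le_of_DD R hCpos hr hball hDD hx hy
    refine ⟨Metric.ball o (r/6), 4 * C + 1, Metric.ball_mem_nhds o (by positivity),
      by positivity, ?_⟩
    intro x hx y hy
    have hC' : ((4 * C + 1 : NNReal) : ℝ≥0∞) ≠ 0 := by
      simp
    have hC'top : ((4 * C + 1 : NNReal) : ℝ≥0∞) ≠ ⊤ := ENNReal.coe_ne_top
    constructor
    · -- edist ≤ C' * ofReal dR, inverted
      have h1 : edist x y ≤ ((4 * C + 1 : NNReal) : ℝ≥0∞) * ENNReal.ofReal (R.dR x y) := by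
        rw [edist_dist, ← ENNReal.ofReal_coe_nnreal, ← ENNReal.ofReal_mul (by positivity)]
        apply ENNReal.ofReal_le_ofReal
        have h2 := hkey x hx y hy
        have h3 : ((4 * C + 1 : NNReal) : ℝ) = 4 * (C:ℝ) + 1 := by push_cast; ring
        rw [h3]
        nlinarith [dR_nonneg R x y]
      calc ((4 * C + 1 : NNReal) : ℝ≥0∞)⁻¹ * edist x y
          ≤ ((4 * C + 1 : NNReal) : ℝ≥0∞)⁻¹ * (((4 * C + 1 : NNReal) : ℝ≥0∞) *
            ENNReal.ofReal (R.dR x y)) := mul_le_mul_right h1 _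
        _ = ENNReal.ofReal (R.dR x y) := by
            rw [← mul_assoc, ENNReal.inv_mul_cancel hC' hC'top, one_mul]
    · calc ENNReal.ofReal (R.dR x y) ≤ edist x y := by
            rw [edist_dist]
            exact ENNReal.ofReal_le_ofReal (R.le_dist x y)
        _ ≤ ((4 * C + 1 : NNReal) : ℝ≥0∞) * edist x y := by
            apply le_mul_of_one_le_left zero_le
            exact_mod_cast le_add_self.trans (le_refl (4 * C + 1 : NNReal))

end DGauge
end
end

section
/- Let (X,d) be a metric space with a reference metric d_R. Then 𝖣 = d (as functions on X×X) if and only if d_R = d, i.e. the reference is the trivial one. -/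
open Filter Set Topology ENNReal

noncomputable section

namespace DGauge

variable {X : Type*}

section Aux

variable [MetricSpace X]

/-- From `DD R z y = edist z y` extract a local Lipschitz estimate. -/
lemma exists_nhds_lip (R : RefMetric X) {y z : X} (hz : DD R z y = edist z y)
    {ε : ℝ} (hε : 0 < ε) :
    ∃ U ∈ 𝓝 z, ∀ a ∈ U, ∀ b ∈ U,
      |dist a y ^ 2 / 2 - dist b y ^ 2 / 2| ≤ (dist z y + ε) * R.dR a b := by
  have hpos : 0 < dist z y + ε := by have := dist_nonneg (x := z) (y := y); linarith
  have hlt : Filter.limsup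
      (fun p : X × X => ENNReal.ofReal (|dist p.1 y ^ 2 / 2 - dist p.2 y ^ 2 / 2| / R.dR p.1 p.2))
      ((𝓝 z ×ˢ 𝓝 z) ⊓ Filter.principal {p : X × X | p.1 ≠ p.2})
      < ENNReal.ofReal (dist z y + ε) := by
    have : DD R z y < ENNReal.ofReal (dist z y + ε) := by
      rw [hz, edist_dist, ENNReal.ofReal_lt_ofReal_iff hpos]
      linarith
    exact this
  have hev := Filter.eventually_lt_of_limsup_lt hlt
  rw [Filter.eventually_inf_principal] at hev
  obtain ⟨U1, hU1, U2, hU2, hsub⟩ := Filter.mem_prod_iff.mp hev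
  refine ⟨U1 ∩ U2, Filter.inter_mem hU1 hU2, ?_⟩
  intro a ha b hb
  rcases eq_or_ne a b with rfl | hab
  · simp only [sub_self, abs_zero]
    exact mul_nonneg hpos.le (dR_nonneg R a a)
  · have hmem := hsub (Set.mk_mem_prod ha.1 hb.2) hab
    have hdR : 0 < R.dR a b := dR_pos R hab
    rw [ENNReal.ofReal_lt_ofReal_iff hpos] at hmem
    exact ((div_lt_iff₀ hdR).mp hmem).le

/-- Per-piece inequality. -/
lemma piece {u v a ε : ℝ} (hv : 0 ≤ v) (ha : 0 ≤ a) (hε : 0 < ε)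
    (h : u ^ 2 - v ^ 2 ≤ (u + v + 4 * ε) * a) :
    max u (Real.sqrt ε) - max v (Real.sqrt ε) ≤ (1 + 2 * Real.sqrt ε) * a := by
  set b := Real.sqrt ε with hb
  have hb0 : 0 < b := Real.sqrt_pos.mpr hε
  have hbb : b ^ 2 = ε := Real.sq_sqrt hε.le
  rcases le_or_gt u (max v b) with hle | hgt
  · have : max u b ≤ max v b := max_le hle (le_max_right _ _)
    have hrhs : 0 ≤ (1 + 2 * b) * a := by positivity
    linarith
  · set M := max v b with hM
    have hMv : v ≤ M := le_max_left _ _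
    have hMb : b ≤ M := le_max_right _ _
    have huM : 2 * b ≤ u + M := by linarith
    have huMpos : 0 < u + M := by linarith
    have hub : max u b = u := max_eq_left (le_trans hMb hgt.le)
    rw [hub]
    have key : (u - M) * (u + M) ≤ ((1 + 2 * b) * a) * (u + M) := by
      have h1 : (u - M) * (u + M) = u ^ 2 - M ^ 2 := by ring
      have h2 : v ^ 2 ≤ M ^ 2 := by nlinarith
      have h3 : u ^ 2 - M ^ 2 ≤ (u + M + 4 * ε) * a := by nlinarith
      have h4 : (u + M + 4 * ε) * a ≤ ((1 + 2 * b) * a) * (u + M) := by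
        nlinarith [mul_nonneg (mul_nonneg ha hb0.le) (sub_nonneg.mpr huM)]
      linarith
    exact le_of_mul_le_mul_right key huMpos



lemma dist_le_dR (R : RefMetric X) (h : ∀ x y : X, DD R x y = edist x y) (x y : X) :
    dist x y ≤ R.dR x y := by
  have key : ∀ ε : ℝ, 0 < ε →
      dist x y ≤ Real.sqrt ε + (1 + 2 * Real.sqrt ε) * (R.dR x y + ε) := by
    intro ε hε
    obtain ⟨γ, hγ0, hγ1, hγL⟩ := R.length x y ε hε
    have hAll : ∀ t : unitInterval, ∃ V ∈ 𝓝 (γ t),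
        (∀ a ∈ V, ∀ b ∈ V, |dist a y ^ 2 / 2 - dist b y ^ 2 / 2| ≤ (dist (γ t) y + ε) * R.dR a b)
        ∧ ∀ w ∈ V, |dist w y - dist (γ t) y| < ε := by
      intro t
      obtain ⟨U, hU, hlipU⟩ := exists_nhds_lip R (h (γ t) y) hε
      have hcont : Continuous fun w : X => |dist w y - dist (γ t) y| :=
        ((continuous_id.dist continuous_const).sub continuous_const).abs
      have hopen : IsOpen {w : X | |dist w y - dist (γ t) y| < ε} :=
        isOpen_lt hcont continuous_const
      refine ⟨U ∩ {w | |dist w y - dist (γ t) y| < ε},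
        Filter.inter_mem hU (hopen.mem_nhds (by simp [hε])), ?_, ?_⟩
      · intro a ha b hb; exact hlipU a ha.1 b hb.1
      · intro w hw; exact hw.2
    choose V hV hlip hosc using hAll
    have hWopen : ∀ t, IsOpen (γ ⁻¹' interior (V t)) := fun t =>
      isOpen_interior.preimage γ.continuous
    have hcover : (Set.univ : Set unitInterval) ⊆ ⋃ t, γ ⁻¹' interior (V t) := by
      intro s _
      exact Set.mem_iUnion.mpr ⟨s, mem_interior_iff_mem_nhds.mpr (hV s)⟩
    obtain ⟨δ, hδ0, hleb⟩ := lebesgue_number_lemma_of_metric isCompact_univ hWopen hcover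
    obtain ⟨N0, hN0⟩ := exists_nat_one_div_lt hδ0
    set N := N0 + 1 with hN
    have hN0' : (0:ℝ) < (N:ℝ) := by exact_mod_cast Nat.succ_pos N0
    have hmem : ∀ i : ℕ, min ((i:ℝ)/(N:ℝ)) 1 ∈ unitInterval := fun i =>
      ⟨le_min (by positivity) zero_le_one, min_le_right _ _⟩
    set pt : ℕ → unitInterval := fun i => ⟨min ((i:ℝ)/(N:ℝ)) 1, hmem i⟩ with hpt
    have hptle : ∀ i : ℕ, i ≤ N → (pt i : ℝ) = (i:ℝ)/(N:ℝ) := by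
      intro i hi
      simp only [hpt]
      exact min_eq_left (by rw [div_le_one hN0']; exact_mod_cast hi)
    have hpt0 : pt 0 = 0 := by
      ext
      simp [hpt]
    have hptN : pt N = 1 := by
      ext
      have h1 := hptle N le_rfl
      simp only [h1]
      field_simp
      rfl
    set b := Real.sqrt ε with hbdef
    have hbn : 0 ≤ b := Real.sqrt_nonneg _
    have hstep : ∀ i, i < N →
        max (dist (γ (pt i)) y) b - max (dist (γ (pt (i+1))) y) b
          ≤ (1 + 2*b) * R.dR (γ (pt i)) (γ (pt (i+1))) := by
      intro i hi
      have hv0 : (pt i : ℝ) = (i:ℝ)/(N:ℝ) := hptle i hi.le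
      have hv1 : (pt (i+1) : ℝ) = ((i:ℝ)+1)/(N:ℝ) := by
        rw [hptle (i+1) hi]; push_cast; ring
      have hdist : dist (pt (i+1)) (pt i) < δ := by
        rw [Subtype.dist_eq, hv1, hv0, Real.dist_eq]
        have he : ((i:ℝ)+1)/(N:ℝ) - (i:ℝ)/(N:ℝ) = 1/(N:ℝ) := by field_simp; ring
        rw [he, abs_of_pos (by positivity)]
        have h2 : (1:ℝ)/(N:ℝ) = 1/((N0:ℝ)+1) := by norm_num [hN]
        rw [h2]; exact hN0
      obtain ⟨s, hs⟩ := hleb (pt i) (Set.mem_univ _)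
      have h1' : γ (pt i) ∈ V s := interior_subset (hs (Metric.mem_ball_self hδ0))
      have h2' : γ (pt (i+1)) ∈ V s := interior_subset (hs (Metric.mem_ball.mpr hdist))
      have hl := hlip s _ h1' _ h2'
      have habs1 := abs_lt.mp (hosc s _ h1')
      have habs2 := abs_lt.mp (hosc s _ h2')
      have han : 0 ≤ R.dR (γ (pt i)) (γ (pt (i+1))) := dR_nonneg R _ _
      have hq : dist (γ (pt i)) y ^ 2 - dist (γ (pt (i+1))) y ^ 2
          ≤ (dist (γ (pt i)) y + dist (γ (pt (i+1))) y + 4*ε) * R.dR (γ (pt i)) (γ (pt (i+1))) := by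
        have hle := le_trans (le_abs_self _) hl
        nlinarith [mul_le_mul_of_nonneg_right
          (show dist (γ s) y + ε ≤ (dist (γ (pt i)) y + dist (γ (pt (i+1))) y + 4*ε)/2 by linarith)
          han]
      exact piece dist_nonneg han hε hq
    have hsum : ∑ i ∈ Finset.range N, R.dR (γ (pt i)) (γ (pt (i+1))) ≤ R.dR x y + ε := by
      have hmono : Monotone (fun j : Fin (N+1) => pt (j:ℕ)) := by
        intro i j hij
        show (pt (i:ℕ) : ℝ) ≤ (pt (j:ℕ) : ℝ)
        simp only [hpt]
        have hc : ((i:ℕ):ℝ) ≤ ((j:ℕ):ℝ) := by exact_mod_cast hij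
        exact min_le_min (by gcongr) le_rfl
      have hh := hγL N (fun j => pt (j:ℕ)) hmono
      rw [← Fin.sum_univ_eq_sum_range (fun i => R.dR (γ (pt i)) (γ (pt (i+1)))) N]
      refine le_trans (le_of_eq (Finset.sum_congr rfl fun i _ => ?_)) hh
      simp [Fin.coe_castSucc, Fin.val_succ]
    have hfin : max (dist (γ (pt 0)) y) b - max (dist (γ (pt N)) y) b
        ≤ (1 + 2*b) * (R.dR x y + ε) := by
      rw [← Finset.sum_range_sub' (fun i => max (dist (γ (pt i)) y) b) N]
      calc ∑ i ∈ Finset.range N,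
            (max (dist (γ (pt i)) y) b - max (dist (γ (pt (i+1))) y) b)
          ≤ ∑ i ∈ Finset.range N, (1 + 2*b) * R.dR (γ (pt i)) (γ (pt (i+1))) :=
            Finset.sum_le_sum fun i hi => hstep i (Finset.mem_range.mp hi)
        _ = (1 + 2*b) * ∑ i ∈ Finset.range N, R.dR (γ (pt i)) (γ (pt (i+1))) := by
            rw [Finset.mul_sum]
        _ ≤ (1 + 2*b) * (R.dR x y + ε) := by
            apply mul_le_mul_of_nonneg_left hsum
            positivity
    have e0 : dist (γ (pt 0)) y = dist x y := by rw [hpt0, hγ0]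
    have eN : dist (γ (pt N)) y = 0 := by rw [hptN, hγ1, dist_self]
    rw [e0, eN, max_eq_right hbn] at hfin
    have h1 : dist x y ≤ max (dist x y) b := le_max_left _ _
    linarith
  have hT : Tendsto (fun ε : ℝ => Real.sqrt ε + (1 + 2 * Real.sqrt ε) * (R.dR x y + ε))
      (𝓝[>] (0:ℝ)) (𝓝 (R.dR x y)) := by
    have hc : Continuous fun ε : ℝ => Real.sqrt ε + (1 + 2 * Real.sqrt ε) * (R.dR x y + ε) := by
      continuity
    have h2 : Tendsto (fun ε : ℝ => Real.sqrt ε + (1 + 2 * Real.sqrt ε) * (R.dR x y + ε))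
        (𝓝[>] (0:ℝ)) (𝓝 (Real.sqrt 0 + (1 + 2 * Real.sqrt 0) * (R.dR x y + 0))) :=
      (hc.tendsto 0).mono_left nhdsWithin_le_nhds
    simpa using h2
  refine ge_of_tendsto hT ?_
  filter_upwards [self_mem_nhdsWithin] with ε hε
  exact key ε hε

set_option maxHeartbeats 1000000 in
lemma DD_eq_of_trivial (R : RefMetric X) (h : ∀ x y : X, R.dR x y = dist x y) (x y : X) :
    DD R x y = edist x y := by
  have hfun : (fun p : X × X =>
      ENNReal.ofReal (|dist p.1 y ^ 2 / 2 - dist p.2 y ^ 2 / 2| / R.dR p.1 p.2)) =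
      fun p : X × X =>
      ENNReal.ofReal (|dist p.1 y ^ 2 / 2 - dist p.2 y ^ 2 / 2| / dist p.1 p.2) := by
    funext p; rw [h]
  rw [DD, asympLip, hfun]
  set F := (𝓝 x ×ˢ 𝓝 x) ⊓ Filter.principal {p : X × X | p.1 ≠ p.2} with hF
  apply le_antisymm
  · -- upper bound
    refine ENNReal.le_of_forall_pos_le_add fun ε hε _ => ?_
    have hεR : (0:ℝ) < (ε:ℝ) := hε
    have hev : ∀ᶠ p in F,
        ENNReal.ofReal (|dist p.1 y ^ 2 / 2 - dist p.2 y ^ 2 / 2| / dist p.1 p.2)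
          ≤ edist x y + (ε : ℝ≥0∞) := by
      rw [hF, Filter.eventually_inf_principal]
      have hball : ∀ᶠ z in 𝓝 x, z ∈ Metric.ball x (ε:ℝ) := Metric.ball_mem_nhds x hεR
      filter_upwards [hball.prod_mk hball] with p hp hne
      obtain ⟨h1, h2⟩ := hp
      rw [edist_dist, ← ENNReal.ofReal_coe_nnreal,
        ← ENNReal.ofReal_add dist_nonneg (by positivity)]
      apply ENNReal.ofReal_le_ofReal
      have hpos : 0 < dist p.1 p.2 := dist_pos.mpr hne
      rw [div_le_iff₀ hpos]
      have hA : dist p.1 y ≤ dist x y + (ε:ℝ) := by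
        have ht := dist_triangle p.1 x y
        have := Metric.mem_ball.mp h1
        linarith
      have hB : dist p.2 y ≤ dist x y + (ε:ℝ) := by
        have ht := dist_triangle p.2 x y
        have := Metric.mem_ball.mp h2
        linarith
      have hAB := abs_le.mp (abs_dist_sub_le p.1 p.2 y)
      rw [abs_le]
      constructor
      · nlinarith [dist_nonneg (x := p.1) (y := y), dist_nonneg (x := p.2) (y := y),
          dist_nonneg (x := p.1) (y := p.2), dist_nonneg (x := x) (y := y)]
      · nlinarith [dist_nonneg (x := p.1) (y := y), dist_nonneg (x := p.2) (y := y),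
          dist_nonneg (x := p.1) (y := p.2), dist_nonneg (x := x) (y := y)]
    exact Filter.limsup_le_of_le (by isBoundedDefault) hev
  · -- lower bound
    rcases eq_or_ne x y with rfl | hxy
    · simp
    · set d := dist x y with hd
      have hd0 : 0 < d := dist_pos.mpr hxy
      have key : ∀ δ : ℝ, 0 < δ → δ < min 1 d →
          ENNReal.ofReal ((1 - δ) * (d - δ/2)) ≤ Filter.limsup (fun p : X × X =>
            ENNReal.ofReal (|dist p.1 y ^ 2 / 2 - dist p.2 y ^ 2 / 2| / dist p.1 p.2)) F := by
        intro δ hδ0 hδm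
        obtain ⟨hδ1, hδd⟩ := lt_min_iff.mp hδm
        refine Filter.le_limsup_of_frequently_le ?_
          ⟨⊤, Filter.eventually_map.2 (Filter.Eventually.of_forall fun _ => le_top)⟩
        rw [Filter.frequently_iff]
        intro W hW
        rw [hF] at hW
        rw [Filter.mem_inf_principal] at hW
        obtain ⟨U1, hU1, U2, hU2, hsub⟩ := Filter.mem_prod_iff.mp hW
        obtain ⟨r, hr0, hball⟩ := Metric.mem_nhds_iff.mp (Filter.inter_mem hU1 hU2)
        set δ' := min δ (r/2) with hδ'
        have hδ'0 : 0 < δ' := lt_min hδ0 (by linarith)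
        have hδ'δ : δ' ≤ δ := min_le_left _ _
        have hδ'r : δ' < r := lt_of_le_of_lt (min_le_right _ _) (by linarith)
        have hδ'1 : δ' < 1 := lt_of_le_of_lt hδ'δ hδ1
        have hδ'd : δ' < d := lt_of_le_of_lt hδ'δ hδd
        obtain ⟨γ, hγ0, hγ1, hγL⟩ := R.length x y (δ'^2) (by positivity)
        have hg : Continuous fun t : unitInterval => dist x (γ t) :=
          continuous_const.dist γ.continuous
        have hIcc : δ' ∈ Set.Icc (dist x (γ 0)) (dist x (γ 1)) := by
          rw [hγ0, hγ1, dist_self]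
          exact ⟨hδ'0.le, hδ'd.le⟩
        obtain ⟨t, ht⟩ := intermediate_value_univ (0:unitInterval) 1 hg hIcc
        have hxz : dist x (γ t) = δ' := ht
        have hzx : γ t ≠ x := by
          intro e
          rw [e, dist_self] at hxz
          exact absurd hxz.symm (ne_of_gt hδ'0)
        -- partition estimate : dist x (γ t) + dist (γ t) y ≤ d + δ'^2
        have hmono : Monotone (![(0:unitInterval), t, 1]) := by
          rw [Fin.monotone_iff_le_succ]
          intro i
          fin_cases i
          · show (0:unitInterval) ≤ t
            exact t.2.1
          · show t ≤ (1:unitInterval)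
            exact t.2.2
        have hpart := hγL 2 ![(0:unitInterval), t, 1] hmono
        have hsum2 : R.dR (γ 0) (γ t) + R.dR (γ t) (γ 1) ≤ R.dR x y + δ'^2 := by
          have e : ∑ i : Fin 2, R.dR (γ ((![(0:unitInterval), t, 1]) i.castSucc))
              (γ ((![(0:unitInterval), t, 1]) i.succ))
              = R.dR (γ 0) (γ t) + R.dR (γ t) (γ 1) := by
            simp [Fin.sum_univ_two]
          rw [e] at hpart
          exact hpart
        rw [hγ0, hγ1, h x (γ t), h (γ t) y, h x y, hxz] at hsum2
        have hzy_le : dist (γ t) y ≤ d - δ' + δ'^2 := by linarith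
        have hzy_ge : d - δ' ≤ dist (γ t) y := by
          have := dist_triangle x (γ t) y
          linarith
        refine ⟨(γ t, x), ?_, ?_⟩
        · apply hsub
          · constructor
            · exact (hball (by rw [Metric.mem_ball, dist_comm]; exact lt_of_le_of_lt hxz.le hδ'r)).1
            · exact mem_of_mem_nhds hU2
          · exact hzx
        · apply ENNReal.ofReal_le_ofReal
          have hdzx : dist (γ t) x = δ' := by rw [dist_comm]; exact hxz
          rw [hdzx, le_div_iff₀ hδ'0]
          have hlow : d^2/2 - dist (γ t) y^2/2 ≤ |dist (γ t) y ^ 2 / 2 - dist x y ^ 2 / 2| := by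
            rw [abs_sub_comm, ← hd]
            exact le_abs_self _
          have hstep1 : (1 - δ) * (d - δ/2) * δ' ≤ (1 - δ') * (d - δ'/2) * δ' := by
            have f1 : (0:ℝ) ≤ 1 - δ := by linarith
            have f2 : (0:ℝ) ≤ d - δ/2 := by linarith
            have : (1 - δ) * (d - δ/2) ≤ (1 - δ') * (d - δ'/2) := by nlinarith
            nlinarith
          have hstep2 : (1 - δ') * (d - δ'/2) * δ' ≤ d^2/2 - dist (γ t) y^2/2 := by
            have hA : δ' - δ'^2 ≤ d - dist (γ t) y := by linarith
            have hB : 2*d - δ' ≤ d + dist (γ t) y := by linarith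
            have hA0 : (0:ℝ) ≤ δ' - δ'^2 := by nlinarith
            have hB0 : (0:ℝ) ≤ 2*d - δ' := by linarith
            have hmul := mul_le_mul hA hB hB0 (by linarith)
            nlinarith [hmul]
          linarith
      have hT : Tendsto (fun δ : ℝ => ENNReal.ofReal ((1 - δ) * (d - δ/2)))
          (𝓝[>] (0:ℝ)) (𝓝 (ENNReal.ofReal d)) := by
        have hc : Continuous fun δ : ℝ => (1 - δ) * (d - δ/2) :=
          (continuous_const.sub continuous_id).mul
            (continuous_const.sub (continuous_id.div_const 2))
        have h2 : Tendsto (fun δ : ℝ => ENNReal.ofReal ((1 - δ) * (d - δ/2)))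
            (𝓝[>] (0:ℝ)) (𝓝 (ENNReal.ofReal ((1 - 0) * (d - 0/2)))) :=
          ((ENNReal.continuous_ofReal.comp hc).tendsto 0).mono_left nhdsWithin_le_nhds
        simpa using h2
      rw [edist_dist, ← hd]
      refine le_of_tendsto hT ?_
      filter_upwards [Ioo_mem_nhdsGT_of_mem (Set.mem_Ico.mpr ⟨le_rfl, lt_min one_pos hd0⟩)]
        with δ hδ
      exact key δ hδ.1 hδ.2


end Aux

/-- `𝖣 = d` if and only if the reference metric is the trivial one,
`d_R = d`. -/
theorem D_eq_dist_iff {X : Type*} [MetricSpace X] (R : RefMetric X) :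
    (∀ x y : X, DD R x y = edist x y) ↔ (∀ x y : X, R.dR x y = dist x y) := by
  constructor
  · intro hDD x y
    exact le_antisymm (R.le_dist x y) (dist_le_dR R hDD x y)
  · intro hR x y
    exact DD_eq_of_trivial R hR x y

end DGauge
end
end

section
/- Scaling property of the model functions: fix an integer ℓ ≥ 1 and κ ∈ ℝ^ℓ. For every λ > 0, set Ω_λ := diag(λ, λ², …, λ^ℓ) and Q_λ := Ω_λ·Q·Ω_λ = diag(λ²κ_1, …, λ^{2ℓ}κ_ℓ). Then N_{Q_λ}(t) = λ·Ω_λ^{−1}·N_Q(tλ)·Ω_λ^{−1} for all t ∈ ℝ; in particular det N_{Q_λ}(t) = λ^{−ℓ²}·det N_Q(tλ) for all t ∈ ℝ. -/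
open Matrix

noncomputable section

namespace LQModel

/-- The `ℓ × ℓ` matrix `Γ₁` with `(Γ₁)_{ij} = 1` if `j = i + 1` and `0` otherwise. -/
def gam1 (ℓ : ℕ) : Matrix (Fin ℓ) (Fin ℓ) ℝ :=
  Matrix.of fun i j => if (j : ℕ) = (i : ℕ) + 1 then 1 else 0

/-- `A := Γ₁ᵀ`. -/
def Amat (ℓ : ℕ) : Matrix (Fin ℓ) (Fin ℓ) ℝ := (gam1 ℓ)ᵀ

/-- `B`, with `B_{11} = 1` and all other entries `0`. -/
def Bmat (ℓ : ℕ) : Matrix (Fin ℓ) (Fin ℓ) ℝ :=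
  Matrix.of fun i j => if (i : ℕ) = 0 ∧ (j : ℕ) = 0 then 1 else 0

/-- The `2ℓ × 2ℓ` block matrix `K(Q') = [[-Aᵀ, -Q'], [B, A]]`. -/
def Kmat (ℓ : ℕ) (Q' : Matrix (Fin ℓ) (Fin ℓ) ℝ) :
    Matrix (Fin ℓ ⊕ Fin ℓ) (Fin ℓ ⊕ Fin ℓ) ℝ :=
  Matrix.fromBlocks (-(Amat ℓ)ᵀ) (-Q') (Bmat ℓ) (Amat ℓ)

/-- The lower-left `ℓ × ℓ` block `N_{Q'}(t)` of `exp (t • K(Q'))`. -/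
def Nmat (ℓ : ℕ) (Q' : Matrix (Fin ℓ) (Fin ℓ) ℝ) (t : ℝ) : Matrix (Fin ℓ) (Fin ℓ) ℝ :=
  (NormedSpace.exp (t • Kmat ℓ Q')).toBlocks₂₁

/-- `Ω_λ = diag (λ, λ², …, λ^ℓ)`. -/
def Omat (ℓ : ℕ) (lam : ℝ) : Matrix (Fin ℓ) (Fin ℓ) ℝ :=
  Matrix.diagonal fun i => lam ^ ((i : ℕ) + 1)

/-- The scaling property of the model functions: with
`Q_λ := Ω_λ · Q · Ω_λ`, one has `N_{Q_λ}(t) = λ · Ω_λ⁻¹ · N_Q(tλ) · Ω_λ⁻¹`, and in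
particular `det N_{Q_λ}(t) = λ^{-ℓ²} · det N_Q(tλ)`, for all `t ∈ ℝ`. -/
theorem lq_model_scaling (ℓ : ℕ) (hℓ : 1 ≤ ℓ) (κ : Fin ℓ → ℝ) (lam : ℝ) (hlam : 0 < lam) :
    (∀ t : ℝ,
      Nmat ℓ (Omat ℓ lam * Matrix.diagonal κ * Omat ℓ lam) t
        = lam • ((Omat ℓ lam)⁻¹ * Nmat ℓ (Matrix.diagonal κ) (t * lam) * (Omat ℓ lam)⁻¹)) ∧
    (∀ t : ℝ,
      (Nmat ℓ (Omat ℓ lam * Matrix.diagonal κ * Omat ℓ lam) t).det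
        = lam ^ (-((ℓ : ℤ) ^ 2)) * (Nmat ℓ (Matrix.diagonal κ) (t * lam)).det) := by
  have hne : lam ≠ 0 := ne_of_gt hlam
  set e1 : Fin ℓ → ℝ := fun i => lam ^ (i : ℕ) with he1
  set e2 : Fin ℓ → ℝ := fun i => (lam ^ ((i : ℕ) + 1))⁻¹ with he2
  set f1 : Fin ℓ → ℝ := fun i => (lam ^ (i : ℕ))⁻¹ with hf1
  set f2 : Fin ℓ → ℝ := fun i => lam ^ ((i : ℕ) + 1) with hf2
  have h11 : Matrix.diagonal e1 * Matrix.diagonal f1 = 1 := by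
    have hfe : (fun i => e1 i * f1 i) = fun _ : Fin ℓ => (1 : ℝ) :=
      funext fun i => mul_inv_cancel₀ (pow_ne_zero _ hne)
    rw [Matrix.diagonal_mul_diagonal, hfe, Matrix.diagonal_one]
  have h12 : Matrix.diagonal f1 * Matrix.diagonal e1 = 1 := by
    have hfe : (fun i => f1 i * e1 i) = fun _ : Fin ℓ => (1 : ℝ) :=
      funext fun i => inv_mul_cancel₀ (pow_ne_zero _ hne)
    rw [Matrix.diagonal_mul_diagonal, hfe, Matrix.diagonal_one]
  have h21 : Matrix.diagonal e2 * Matrix.diagonal f2 = 1 := by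
    have hfe : (fun i => e2 i * f2 i) = fun _ : Fin ℓ => (1 : ℝ) :=
      funext fun i => inv_mul_cancel₀ (pow_ne_zero _ hne)
    rw [Matrix.diagonal_mul_diagonal, hfe, Matrix.diagonal_one]
  have h22 : Matrix.diagonal f2 * Matrix.diagonal e2 = 1 := by
    have hfe : (fun i => f2 i * e2 i) = fun _ : Fin ℓ => (1 : ℝ) :=
      funext fun i => mul_inv_cancel₀ (pow_ne_zero _ hne)
    rw [Matrix.diagonal_mul_diagonal, hfe, Matrix.diagonal_one]
  set U : Matrix (Fin ℓ ⊕ Fin ℓ) (Fin ℓ ⊕ Fin ℓ) ℝ :=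
    Matrix.fromBlocks (Matrix.diagonal e1) 0 0 (Matrix.diagonal e2) with hU
  set V : Matrix (Fin ℓ ⊕ Fin ℓ) (Fin ℓ ⊕ Fin ℓ) ℝ :=
    Matrix.fromBlocks (Matrix.diagonal f1) 0 0 (Matrix.diagonal f2) with hV
  have hUV : U * V = 1 := by
    rw [hU, hV, Matrix.fromBlocks_multiply]
    simp only [Matrix.mul_zero, Matrix.zero_mul, add_zero, zero_add, h11, h21]
    exact Matrix.fromBlocks_one
  have hVU : V * U = 1 := by
    rw [hU, hV, Matrix.fromBlocks_multiply]
    simp only [Matrix.mul_zero, Matrix.zero_mul, add_zero, zero_add, h12, h22]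
    exact Matrix.fromBlocks_one
  set u : (Matrix (Fin ℓ ⊕ Fin ℓ) (Fin ℓ ⊕ Fin ℓ) ℝ)ˣ := ⟨U, V, hUV, hVU⟩ with hu
  have hOinv : (Omat ℓ lam)⁻¹ = Matrix.diagonal e2 := by
    apply Matrix.inv_eq_right_inv
    have hfe : (fun i : Fin ℓ => lam ^ ((i : ℕ) + 1) * e2 i) = fun _ : Fin ℓ => (1 : ℝ) :=
      funext fun i => mul_inv_cancel₀ (pow_ne_zero _ hne)
    rw [Omat, Matrix.diagonal_mul_diagonal, hfe, Matrix.diagonal_one]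
  -- The key conjugation identity
  have hkey : ∀ t : ℝ,
      t • Kmat ℓ (Omat ℓ lam * Matrix.diagonal κ * Omat ℓ lam)
        = U * ((t * lam) • Kmat ℓ (Matrix.diagonal κ)) * V := by
    intro t
    rw [Matrix.mul_smul, Matrix.smul_mul]
    rw [Kmat, Kmat, hU, hV, Matrix.fromBlocks_multiply, Matrix.fromBlocks_multiply]
    simp only [Matrix.mul_zero, Matrix.zero_mul, add_zero, zero_add]
    rw [Matrix.fromBlocks_smul, Matrix.fromBlocks_smul, Matrix.fromBlocks_inj]
    refine ⟨?_, ?_, ?_, ?_⟩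
    · ext i j
      simp only [Matrix.smul_apply, Matrix.diagonal_mul, Matrix.mul_diagonal,
        Matrix.neg_apply, Amat, gam1, Matrix.transpose_transpose, Matrix.transpose_apply,
        Matrix.of_apply, smul_eq_mul, he1, he2, hf1, hf2]
      split_ifs with h
      · rw [h]; field_simp; try ring
      · ring
    · -- -(Ω Q Ω) block
      have hA : Omat ℓ lam * Matrix.diagonal κ * Omat ℓ lam
          = Matrix.diagonal (fun i : Fin ℓ => lam ^ ((i : ℕ) + 1) * κ i * lam ^ ((i : ℕ) + 1)) := by
        rw [Omat, Matrix.diagonal_mul_diagonal, Matrix.diagonal_mul_diagonal]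
      have hB : Matrix.diagonal e1 * -Matrix.diagonal κ * Matrix.diagonal f2
          = Matrix.diagonal (fun i : Fin ℓ => e1 i * -κ i * f2 i) := by
        rw [Matrix.mul_neg, Matrix.neg_mul, Matrix.diagonal_mul_diagonal,
          Matrix.diagonal_mul_diagonal]
        ext i j
        rcases eq_or_ne i j with h | h
        · subst h; simp
        · simp [Matrix.diagonal_apply_ne _ h]
      rw [hA, hB]
      ext i j
      rcases eq_or_ne i j with h | h
      · subst h
        simp only [Matrix.smul_apply, Matrix.neg_apply, Matrix.diagonal_apply_eq,
          smul_eq_mul, he1, hf2]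
        ring
      · simp [Matrix.diagonal_apply_ne _ h]
    · ext i j
      simp only [Matrix.smul_apply, Matrix.diagonal_mul, Matrix.mul_diagonal,
        Bmat, Matrix.of_apply, smul_eq_mul, he1, he2, hf1, hf2]
      split_ifs with h
      · obtain ⟨h1, h2⟩ := h
        rw [h1, h2]; field_simp; try ring
      · ring
    · ext i j
      simp only [Matrix.smul_apply, Matrix.diagonal_mul, Matrix.mul_diagonal,
        Amat, gam1, Matrix.transpose_apply, Matrix.of_apply, smul_eq_mul, he1, he2, hf1, hf2]
      split_ifs with h
      · rw [h]; field_simp; try ring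
      · ring
  -- Main scaling identity
  have hmain : ∀ t : ℝ,
      Nmat ℓ (Omat ℓ lam * Matrix.diagonal κ * Omat ℓ lam) t
        = lam • ((Omat ℓ lam)⁻¹ * Nmat ℓ (Matrix.diagonal κ) (t * lam) * (Omat ℓ lam)⁻¹) := by
    intro t
    have hconj : NormedSpace.exp (t • Kmat ℓ (Omat ℓ lam * Matrix.diagonal κ * Omat ℓ lam))
        = U * NormedSpace.exp ((t * lam) • Kmat ℓ (Matrix.diagonal κ)) * V := by
      rw [hkey t]
      have := Matrix.exp_units_conj u ((t * lam) • Kmat ℓ (Matrix.diagonal κ))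
      simpa [hu] using this
    set E := NormedSpace.exp ((t * lam) • Kmat ℓ (Matrix.diagonal κ)) with hE
    have hblocks : (U * E * V).toBlocks₂₁
        = Matrix.diagonal e2 * E.toBlocks₂₁ * Matrix.diagonal f1 := by
      have hEb : E = Matrix.fromBlocks E.toBlocks₁₁ E.toBlocks₁₂ E.toBlocks₂₁ E.toBlocks₂₂ :=
        (Matrix.fromBlocks_toBlocks E).symm
      rw [hU, hV]
      conv_lhs => rw [hEb]
      rw [Matrix.fromBlocks_multiply, Matrix.fromBlocks_multiply]
      simp only [Matrix.toBlocks₂₁, Matrix.zero_mul, Matrix.mul_zero, add_zero, zero_add]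
      ext i j
      simp [Matrix.mul_diagonal, Matrix.diagonal_mul, Matrix.toBlocks₂₁]
    rw [Nmat, hconj, hblocks, hOinv]
    have hNmat : E.toBlocks₂₁ = Nmat ℓ (Matrix.diagonal κ) (t * lam) := rfl
    rw [hNmat]
    set N := Nmat ℓ (Matrix.diagonal κ) (t * lam) with hN
    ext i j
    simp only [Matrix.smul_apply, Matrix.diagonal_mul, Matrix.mul_diagonal, smul_eq_mul,
      he2, hf1]
    field_simp
    ring
  refine ⟨hmain, fun t => ?_⟩
  rw [hmain t]
  rw [Matrix.det_smul, Matrix.det_mul, Matrix.det_mul, hOinv, Matrix.det_diagonal]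
  have hprod : (∏ i : Fin ℓ, e2 i) = (lam ^ (∑ i : Fin ℓ, ((i : ℕ) + 1)))⁻¹ :=
    calc (∏ i : Fin ℓ, e2 i) = ∏ i : Fin ℓ, (lam ^ ((i : ℕ) + 1))⁻¹ := rfl
      _ = (∏ i : Fin ℓ, lam ^ ((i : ℕ) + 1))⁻¹ := Finset.prod_inv_distrib _
      _ = (lam ^ (∑ i : Fin ℓ, ((i : ℕ) + 1)))⁻¹ := by
          rw [Finset.prod_pow_eq_pow_sum]
  have hgauss : ∀ n : ℕ, 2 * (∑ i ∈ Finset.range n, (i + 1)) = n + n ^ 2 := by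
    intro n
    induction n with
    | zero => simp
    | succ m ih =>
      rw [Finset.sum_range_succ, Nat.mul_add, ih]
      ring
  have hsum : 2 * (∑ i : Fin ℓ, ((i : ℕ) + 1)) = ℓ + ℓ ^ 2 := by
    have hfr : (∑ i : Fin ℓ, ((i : ℕ) + 1)) = ∑ i ∈ Finset.range ℓ, (i + 1) := by
      rw [Finset.sum_range fun i => i + 1]
    rw [hfr, hgauss]
  rw [hprod]
  set S := ∑ i : Fin ℓ, ((i : ℕ) + 1) with hS
  have hcard : Fintype.card (Fin ℓ) = ℓ := Fintype.card_fin ℓ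
  rw [hcard]
  have hz : (lam : ℝ) ^ (-((ℓ : ℤ) ^ 2)) = (lam ^ (ℓ ^ 2 : ℕ))⁻¹ := by
    rw [_root_.zpow_neg]
    norm_cast
  rw [hz]
  have hpow : lam ^ ℓ * ((lam ^ S)⁻¹ * (Nmat ℓ (Matrix.diagonal κ) (t * lam)).det * (lam ^ S)⁻¹)
      = (lam ^ (ℓ ^ 2 : ℕ))⁻¹ * (Nmat ℓ (Matrix.diagonal κ) (t * lam)).det := by
    have hSS : lam ^ S * lam ^ S = lam ^ ℓ * lam ^ (ℓ ^ 2 : ℕ) := by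
      rw [← pow_add, ← pow_add]
      congr 1
      omega
    field_simp
    linear_combination (-(Nmat ℓ (Matrix.diagonal κ) (t * lam)).det) * hSS
  rw [hpow]

end LQModel
end
end
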